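/- arXiv:2208.01362 — 4 statements merged into one kernel-verified Lean document; each statement's English description precedes it below -/
import Mathlib

section
/- Let g : ℝ^d → ℝ^m be such that g_k(x) > 0 for every component k and every x ∈ ℝ^d, and let Ω = {w ∈ ℝ^m : w_k ≥ 0 for all k, ∑_k w_k = 1}. Define G(x,w) = max_{k=1,…,m} w_k g_k(x). If x̄ ∈ ℝ^d is weakly Edgeworth–Pareto optimal (there is no x with g_k(x) < g_k(x̄) for all k), then there exists w ∈ Ω such that x̄ is a global minimizer of x ↦ G(x,w); in fact one may take w_k = (1/g_k(x̄)) / (∑_{j=1}^m 1/g_j(x̄)). -/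
open Finset

/-- Chebyshev scalarization `G(x,w) = max_k w_k * g_k(x)` (for componentwise
positive `g` this equals `max_k w_k * |g_k(x)|`). -/
noncomputable def chebyshevScalarization {d m : ℕ} [NeZero m]
    (g : (Fin d → ℝ) → Fin m → ℝ) (x : Fin d → ℝ) (w : Fin m → ℝ) : ℝ :=
  Finset.univ.sup' Finset.univ_nonempty (fun k => w k * g x k)

/-- If `xb` is weakly Edgeworth–Pareto optimal for a componentwise positive `g`,
then `xb` globally minimizes the Chebyshev scalarization `G(·,w)` for the weight
vector `w` in the unit simplex given by `w_k = (1/g_k(xb)) / (∑_j 1/g_j(xb))`. -/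
theorem weakly_EP_optimal_is_chebyshev_minimizer
    {d m : ℕ} [NeZero m] (g : (Fin d → ℝ) → Fin m → ℝ)
    (hg : ∀ x k, 0 < g x k)
    (xb : Fin d → ℝ)
    (hweak : ¬ ∃ x : Fin d → ℝ, ∀ k, g x k < g xb k) :
    ∃ w : Fin m → ℝ,
      (∀ k, 0 ≤ w k) ∧ (∑ k, w k = 1) ∧
      (∀ x : Fin d → ℝ,
        chebyshevScalarization g xb w ≤ chebyshevScalarization g x w) ∧
      w = fun k => (g xb k)⁻¹ / (∑ j, (g xb j)⁻¹) := by
  set S : ℝ := ∑ j, (g xb j)⁻¹ with hS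
  have hSpos : 0 < S := Finset.sum_pos (fun j _ => inv_pos.2 (hg xb j)) univ_nonempty
  have hwnn : ∀ k : Fin m, 0 ≤ (g xb k)⁻¹ / S :=
    fun k => div_nonneg (inv_nonneg.2 (hg xb k).le) hSpos.le
  refine ⟨fun k => (g xb k)⁻¹ / S, hwnn, ?_, ?_, rfl⟩
  · rw [← Finset.sum_div, ← hS, div_self hSpos.ne']
  · intro x
    have hwxb : ∀ k : Fin m, (g xb k)⁻¹ / S * g xb k = S⁻¹ := by
      intro k
      rw [div_mul_eq_mul_div, inv_mul_cancel₀ (hg xb k).ne', one_div]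
    have hub : chebyshevScalarization g xb (fun k => (g xb k)⁻¹ / S) = S⁻¹ := by
      unfold chebyshevScalarization
      apply le_antisymm
      · exact Finset.sup'_le _ _ fun k _ => (hwxb k).le
      · exact le_trans (hwxb (Classical.arbitrary (Fin m))).ge
          (Finset.le_sup' (fun k => (g xb k)⁻¹ / S * g xb k)
            (Finset.mem_univ (Classical.arbitrary (Fin m))))
    rw [hub]
    push_neg at hweak
    obtain ⟨k, hk⟩ := hweak x
    calc S⁻¹ = (g xb k)⁻¹ / S * g xb k := (hwxb k).symm
      _ ≤ (g xb k)⁻¹ / S * g x k :=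
          mul_le_mul_of_nonneg_left hk (hwnn k)
      _ ≤ _ := Finset.le_sup' (fun k => (g xb k)⁻¹ / S * g x k) (Finset.mem_univ k)
end

section
/- Let g : ℝ^d → ℝ^m be componentwise positive, let Ω be the unit simplex in ℝ^m, and define G(x,w) = max_{k=1,…,m} w_k g_k(x). Assume that for every w ∈ Ω the scalar problem min_{x ∈ ℝ^d} G(x,w) attains a unique global minimizer. If x̄ ∈ ℝ^d is Edgeworth–Pareto optimal (there is no x with g_k(x) ≤ g_k(x̄) for all k and g(x) ≠ g(x̄)), then there exists w ∈ Ω such that x̄ is the (unique) global minimizer of x ↦ G(x,w). -/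
open Finset

/-!
Weight each objective by the reciprocal of its value at `x̄`, normalised to the simplex. Then all
terms `w_k g_k(x̄)` coincide, so any `y` with `G(y,w) < G(x̄,w)` satisfies `g_k(y) < g_k(x̄)` for
every `k`, contradicting Edgeworth–Pareto optimality. Thus `x̄` minimises `G(·,w)`, and by the
uniqueness hypothesis it is the only minimiser.
-/

section InverseWeight

variable {ι : Type*} [Fintype ι]

noncomputable def inverseWeight (v : ι → ℝ) (k : ι) : ℝ :=
  (v k)⁻¹ / ∑ j, (v j)⁻¹

variable {v : ι → ℝ}

lemma inverseWeight_mul_self (hv : ∀ k, 0 < v k) (k : ι) :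
    inverseWeight v k * v k = (∑ j, (v j)⁻¹)⁻¹ := by
  rw [inverseWeight, div_mul_eq_mul_div, inv_mul_cancel₀ (hv k).ne', one_div]

variable [Nonempty ι]

lemma sum_inv_pos (hv : ∀ k, 0 < v k) : 0 < ∑ j, (v j)⁻¹ :=
  sum_pos (fun k _ => inv_pos.2 (hv k)) univ_nonempty

lemma inverseWeight_pos (hv : ∀ k, 0 < v k) (k : ι) : 0 < inverseWeight v k :=
  div_pos (inv_pos.2 (hv k)) (sum_inv_pos hv)

lemma sum_inverseWeight (hv : ∀ k, 0 < v k) : ∑ k, inverseWeight v k = 1 := by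
  simp only [inverseWeight]
  rw [← sum_div, div_self (sum_inv_pos hv).ne']

end InverseWeight

section Chebyshev

variable {d m : ℕ} [NeZero m] {g : (Fin d → ℝ) → Fin m → ℝ} {w : Fin m → ℝ}

lemma mul_le_chebyshevScalarization (x : Fin d → ℝ) (k : Fin m) :
    w k * g x k ≤ chebyshevScalarization g x w :=
  le_sup' (fun k => w k * g x k) (mem_univ k)

lemma chebyshevScalarization_eq_of_forall_mul_eq {x : Fin d → ℝ} {c : ℝ}
    (h : ∀ k, w k * g x k = c) : chebyshevScalarization g x w = c := by
  rw [chebyshevScalarization, sup'_congr univ_nonempty rfl (fun k _ => h k), sup'_const]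

lemma lt_of_chebyshevScalarization_lt {x y : Fin d → ℝ} (hw : ∀ k, 0 < w k)
    (hx : ∀ k, w k * g x k = chebyshevScalarization g x w)
    (hlt : chebyshevScalarization g y w < chebyshevScalarization g x w) (k : Fin m) :
    g y k < g x k :=
  lt_of_mul_lt_mul_left ((mul_le_chebyshevScalarization y k).trans_lt (hx k ▸ hlt)) (hw k).le

lemma chebyshevScalarization_inverseWeight_le_of_paretoOptimal {xb : Fin d → ℝ}
    (hg : ∀ k, 0 < g xb k)
    (hEP : ¬ ∃ x : Fin d → ℝ, (∀ k, g x k ≤ g xb k) ∧ g x ≠ g xb) (y : Fin d → ℝ) :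
    chebyshevScalarization g xb (inverseWeight (g xb)) ≤
      chebyshevScalarization g y (inverseWeight (g xb)) := by
  by_contra! hlt
  have hbal : ∀ k, inverseWeight (g xb) k * g xb k =
      chebyshevScalarization g xb (inverseWeight (g xb)) := fun k => by
    rw [chebyshevScalarization_eq_of_forall_mul_eq (inverseWeight_mul_self hg),
      inverseWeight_mul_self hg]
  have hdom := lt_of_chebyshevScalarization_lt (inverseWeight_pos hg) hbal hlt
  exact hEP ⟨y, fun k => (hdom k).le, fun heq => (hdom 0).ne (congrFun heq 0)⟩

end Chebyshev

/-- If every Chebyshev sub-problem (with weight in the unit simplex) attains a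
unique global minimizer, then every (strongly) Edgeworth–Pareto optimal point
`xb` is the unique global minimizer of `G(·,w)` for some weight `w` in the
unit simplex. -/
theorem EP_optimal_is_unique_chebyshev_minimizer
    {d m : ℕ} [NeZero m] (g : (Fin d → ℝ) → Fin m → ℝ)
    (hg : ∀ x k, 0 < g x k)
    (huniq : ∀ w : Fin m → ℝ, (∀ k, 0 ≤ w k) → (∑ k, w k = 1) →
      ∃! x : Fin d → ℝ, ∀ y : Fin d → ℝ,
        chebyshevScalarization g x w ≤ chebyshevScalarization g y w)
    (xb : Fin d → ℝ)
    (hEP : ¬ ∃ x : Fin d → ℝ, (∀ k, g x k ≤ g xb k) ∧ g x ≠ g xb) :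
    ∃ w : Fin m → ℝ,
      (∀ k, 0 ≤ w k) ∧ (∑ k, w k = 1) ∧
      (∀ y : Fin d → ℝ,
        chebyshevScalarization g xb w ≤ chebyshevScalarization g y w) ∧
      (∀ x : Fin d → ℝ,
        (∀ y : Fin d → ℝ,
          chebyshevScalarization g x w ≤ chebyshevScalarization g y w) → x = xb) := by
  have hw_nonneg : ∀ k, 0 ≤ inverseWeight (g xb) k := fun k =>
    (inverseWeight_pos (hg xb) k).le
  have hw_sum := sum_inverseWeight (hg xb)
  have hmin := chebyshevScalarization_inverseWeight_le_of_paretoOptimal (hg xb) hEP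
  obtain ⟨_, -, hunique⟩ := huniq _ hw_nonneg hw_sum
  exact ⟨_, hw_nonneg, hw_sum, hmin, fun x hx => (hunique x hx).trans (hunique xb hmin).symm⟩
end

section
/- Let Ω = {y ∈ ℝ² : y₁ ≥ 0, y₂ ≥ 0, y₁ + y₂ = 1} be the unit simplex in ℝ², and let w = (w₁, w₂) ∈ Ω. Then the function y ↦ max{w₁ y₁, w₂ y₂} on Ω attains its minimum at the unique point y = (w₂, w₁); that is, ḡ(w) = A w where A is the 2×2 matrix with rows (0,1) and (1,0). -/
/-- For a weight `w = (w₁,w₂)` in the unit simplex of `ℝ²`, the function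
`y ↦ max (w₁ y₁) (w₂ y₂)` on the simplex attains its minimum at the unique
point `y = (w₂, w₁) = A w`, where `A` is the coordinate swap. -/
theorem chebyshev_on_simplex_min_at_swap
    (w₁ w₂ : ℝ) (hw₁ : 0 ≤ w₁) (hw₂ : 0 ≤ w₂) (hw : w₁ + w₂ = 1) :
    (0 ≤ w₂ ∧ 0 ≤ w₁ ∧ w₂ + w₁ = 1) ∧
    (∀ y₁ y₂ : ℝ, 0 ≤ y₁ → 0 ≤ y₂ → y₁ + y₂ = 1 →
      max (w₁ * w₂) (w₂ * w₁) ≤ max (w₁ * y₁) (w₂ * y₂)) ∧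
    (∀ y₁ y₂ : ℝ, 0 ≤ y₁ → 0 ≤ y₂ → y₁ + y₂ = 1 →
      (∀ z₁ z₂ : ℝ, 0 ≤ z₁ → 0 ≤ z₂ → z₁ + z₂ = 1 →
        max (w₁ * y₁) (w₂ * y₂) ≤ max (w₁ * z₁) (w₂ * z₂)) →
      y₁ = w₂ ∧ y₂ = w₁) := by
  have key : ∀ y₁ y₂ : ℝ, 0 ≤ y₁ → 0 ≤ y₂ → y₁ + y₂ = 1 →
      w₁ * w₂ ≤ max (w₁ * y₁) (w₂ * y₂) := by
    intro y₁ y₂ hy₁ hy₂ hy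
    have h1 : w₁ * y₁ ≤ max (w₁ * y₁) (w₂ * y₂) := le_max_left _ _
    have h2 : w₂ * y₂ ≤ max (w₁ * y₁) (w₂ * y₂) := le_max_right _ _
    set M := max (w₁ * y₁) (w₂ * y₂) with hM
    have e : w₂ * (w₁ * y₁) + w₁ * (w₂ * y₂) = w₁ * w₂ := by
      linear_combination w₁ * w₂ * hy
    have eM : w₂ * M + w₁ * M = M := by linear_combination M * hw
    linarith [mul_le_mul_of_nonneg_left h1 hw₂, mul_le_mul_of_nonneg_left h2 hw₁]
  refine ⟨⟨hw₂, hw₁, by linarith⟩, ?_, ?_⟩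
  · intro y₁ y₂ hy₁ hy₂ hy
    have := key y₁ y₂ hy₁ hy₂ hy
    rw [mul_comm w₂ w₁, max_self]
    exact this
  · intro y₁ y₂ hy₁ hy₂ hy hmin
    have h := hmin w₂ w₁ hw₂ hw₁ (by linarith)
    have hge := key y₁ y₂ hy₁ hy₂ hy
    rw [mul_comm w₂ w₁, max_self] at h
    have h1 : w₁ * y₁ ≤ w₁ * w₂ := le_trans (le_max_left _ _) h
    have h2 : w₂ * y₂ ≤ w₁ * w₂ := le_trans (le_max_right _ _) h
    rcases eq_or_lt_of_le hw₁ with h1z | h1p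
    · have hw2 : w₂ = 1 := by linarith
      have : y₂ ≤ 0 := by nlinarith
      constructor <;> nlinarith
    rcases eq_or_lt_of_le hw₂ with h2z | h2p
    · have : y₁ ≤ 0 := by nlinarith
      constructor <;> nlinarith
    have hy1 : y₁ ≤ w₂ := le_of_mul_le_mul_left h1 h1p
    have hy2 : y₂ ≤ w₁ := by
      have := le_of_mul_le_mul_left (by linarith [h2] : w₂ * y₂ ≤ w₂ * w₁) h2p
      exact this
    constructor <;> linarith
end

section
/- Let Ω = {y ∈ ℝ² : y₁ ≥ 0, y₂ ≥ 0, y₁ + y₂ = 1}, let A : ℝ² → ℝ² be the coordinate-swap map, and let P be the orthogonal projection of ℝ² onto the subspace spanned by (1,−1). Suppose U : ℝ² → ℝ is differentiable away from 0 and radially symmetric, i.e. U(z) = r(|z|) for some r : ℝ_{≥0} → ℝ. Then for all w, v ∈ Ω with w ≠ v, letting ḡ(w) = Aw and ḡ(v) = Av, one has P(∇U(ḡ(w) − ḡ(v))) = −P(∇U(w − v)). -/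
/-!
On the simplex the coordinates of `w - v` sum to zero, so swapping them negates the vector:
`Aw - Av = -(w - v)`. A radial potential is even, hence its gradient is odd, and the linear
projection `P` carries the sign through.
-/

/-- The coordinate-swap map `A(u₁,u₂) = (u₂,u₁)` on `ℝ²`. -/
noncomputable def swapMap : EuclideanSpace ℝ (Fin 2) → EuclideanSpace ℝ (Fin 2) :=
  fun u => WithLp.toLp 2 ![u 1, u 0]

/-- The span of `n₂ = (1,−1)` in `ℝ²`. -/
noncomputable def spanN₂ : Submodule ℝ (EuclideanSpace ℝ (Fin 2)) :=
  Submodule.span ℝ {(WithLp.toLp 2 ![1, -1] : EuclideanSpace ℝ (Fin 2))}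

section EvenFunction

variable {𝕜 E F : Type*} [NontriviallyNormedField 𝕜] [NormedAddCommGroup E] [NormedSpace 𝕜 E]
  [NormedAddCommGroup F] [NormedSpace 𝕜 F]

theorem fderiv_neg_of_even {f : E → F} (hf : ∀ x, f (-x) = f x) (x : E) :
    fderiv 𝕜 f (-x) = -fderiv 𝕜 f x := by
  have hcomp : f ∘ (ContinuousLinearEquiv.neg 𝕜 : E ≃L[𝕜] E) = f := funext hf
  have hchain := (ContinuousLinearEquiv.neg 𝕜 : E ≃L[𝕜] E).comp_right_fderiv (f := f) (x := x)
  rw [hcomp] at hchain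
  ext y
  simp [hchain]

end EvenFunction

theorem gradient_neg_of_even {H : Type*} [NormedAddCommGroup H] [InnerProductSpace ℝ H]
    [CompleteSpace H] {f : H → ℝ} (hf : ∀ x, f (-x) = f x) (x : H) :
    gradient f (-x) = -gradient f x := by
  rw [gradient, gradient, fderiv_neg_of_even hf, map_neg]

theorem swapMap_sub_swapMap_of_sum_eq {w v : EuclideanSpace ℝ (Fin 2)}
    (h : w 0 + w 1 = v 0 + v 1) : swapMap w - swapMap v = -(w - v) := by
  ext i
  fin_cases i <;> simp [swapMap] <;> linarith

theorem proj_gradient_swap_eq_neg_general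
    (r : ℝ → ℝ) (U : EuclideanSpace ℝ (Fin 2) → ℝ)
    (hrad : ∀ z : EuclideanSpace ℝ (Fin 2), U z = r ‖z‖)
    (w v : EuclideanSpace ℝ (Fin 2))
    (hw : 0 ≤ w 0 ∧ 0 ≤ w 1 ∧ w 0 + w 1 = 1)
    (hv : 0 ≤ v 0 ∧ 0 ≤ v 1 ∧ v 0 + v 1 = 1) :
    ((spanN₂.orthogonalProjectionOnto (gradient U (swapMap w - swapMap v)) : spanN₂)
        : EuclideanSpace ℝ (Fin 2))
      = -((spanN₂.orthogonalProjectionOnto (gradient U (w - v)) : spanN₂)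
        : EuclideanSpace ℝ (Fin 2)) := by
  have hU_even : ∀ z, U (-z) = U z := fun z => by rw [hrad, hrad, norm_neg]
  rw [swapMap_sub_swapMap_of_sum_eq (hw.2.2.trans hv.2.2.symm), gradient_neg_of_even hU_even,
    map_neg, Submodule.coe_neg]

/-- Lemma 4.5 of the paper: if `U` is radially symmetric and differentiable
away from `0`, then for distinct `w, v` in the unit simplex of `ℝ²`, with
`ḡ(w) = Aw` and `ḡ(v) = Av` (A the coordinate swap), the orthogonal projection
`P` onto the span of `(1,−1)` satisfies
`P(∇U(ḡ(w) − ḡ(v))) = −P(∇U(w − v))`. -/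
theorem proj_gradient_swap_eq_neg
    (r : ℝ → ℝ) (U : EuclideanSpace ℝ (Fin 2) → ℝ)
    (hrad : ∀ z : EuclideanSpace ℝ (Fin 2), U z = r ‖z‖)
    (hdiff : ∀ z : EuclideanSpace ℝ (Fin 2), z ≠ 0 → DifferentiableAt ℝ U z)
    (w v : EuclideanSpace ℝ (Fin 2))
    (hw : 0 ≤ w 0 ∧ 0 ≤ w 1 ∧ w 0 + w 1 = 1)
    (hv : 0 ≤ v 0 ∧ 0 ≤ v 1 ∧ v 0 + v 1 = 1)
    (hne : w ≠ v) :
    ((spanN₂.orthogonalProjectionOnto (gradient U (swapMap w - swapMap v)) : spanN₂)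
        : EuclideanSpace ℝ (Fin 2))
      = -((spanN₂.orthogonalProjectionOnto (gradient U (w - v)) : spanN₂)
        : EuclideanSpace ℝ (Fin 2)) :=
  proj_gradient_swap_eq_neg_general r U hrad w v hw hv
end
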